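/- Let V be the ℚ-vector space with basis the ten symbols D_{ij} for 2-element subsets {i,j} of {1,2,3,4,5}, with symmetric bilinear form D_{ij}·D_{ij} = −1, D_{ij}·D_{kl} = 1 if {i,j} ∩ {k,l} = ∅, and D_{ij}·D_{kl} = 0 if {i,j} ≠ {k,l} but {i,j} ∩ {k,l} ≠ ∅. Set δ₂ = −(D_{23} + D_{15} + D_{14}), δ₁₂ = D_{45} + D_{23}, δ₀ = −2D_{45} − D_{23} − D_{34} − D_{12} + D_{14}. Then δ₂·δ₂ = 1, δ₁₂·δ₂ = −2, δ₀·δ₂ = 4. -/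
import Mathlib


theorem stmt_6 (V : Type*) [AddCommGroup V] [Module ℚ V]
    (B : LinearMap.BilinForm ℚ V) (D : Fin 5 → Fin 5 → V)
    (hB : ∀ i j k l : Fin 5, i ≠ j → k ≠ l →
      B (D i j) (D k l) =
        if ({i, j} : Finset (Fin 5)) = {k, l} then -1
        else if Disjoint ({i, j} : Finset (Fin 5)) ({k, l} : Finset (Fin 5)) then 1
        else 0) :
    let δ₂ : V := -(D 1 2 + D 0 4 + D 0 3)
    let δ₁₂ : V := D 3 4 + D 1 2
    let δ₀ : V := (-2 : ℚ) • D 3 4 - D 1 2 - D 2 3 - D 0 1 + D 0 3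
    B δ₂ δ₂ = 1 ∧ B δ₁₂ δ₂ = -2 ∧ B δ₀ δ₂ = 4 := by
  intro δ₂ δ₁₂ δ₀
  have e1 : B (D 1 2) (D 1 2) = -1 := by
    rw [hB 1 2 1 2 (by decide) (by decide), if_pos (by decide)]
  have e2 : B (D 1 2) (D 0 4) = 1 := by
    rw [hB 1 2 0 4 (by decide) (by decide), if_neg (by decide), if_pos (by decide)]
  have e3 : B (D 1 2) (D 0 3) = 1 := by
    rw [hB 1 2 0 3 (by decide) (by decide), if_neg (by decide), if_pos (by decide)]
  have e4 : B (D 0 4) (D 1 2) = 1 := by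
    rw [hB 0 4 1 2 (by decide) (by decide), if_neg (by decide), if_pos (by decide)]
  have e5 : B (D 0 4) (D 0 4) = -1 := by
    rw [hB 0 4 0 4 (by decide) (by decide), if_pos (by decide)]
  have e6 : B (D 0 4) (D 0 3) = 0 := by
    rw [hB 0 4 0 3 (by decide) (by decide), if_neg (by decide), if_neg (by decide)]
  have e7 : B (D 0 3) (D 1 2) = 1 := by
    rw [hB 0 3 1 2 (by decide) (by decide), if_neg (by decide), if_pos (by decide)]
  have e8 : B (D 0 3) (D 0 4) = 0 := by
    rw [hB 0 3 0 4 (by decide) (by decide), if_neg (by decide), if_neg (by decide)]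
  have e9 : B (D 0 3) (D 0 3) = -1 := by
    rw [hB 0 3 0 3 (by decide) (by decide), if_pos (by decide)]
  have e10 : B (D 3 4) (D 1 2) = 1 := by
    rw [hB 3 4 1 2 (by decide) (by decide), if_neg (by decide), if_pos (by decide)]
  have e11 : B (D 3 4) (D 0 4) = 0 := by
    rw [hB 3 4 0 4 (by decide) (by decide), if_neg (by decide), if_neg (by decide)]
  have e12 : B (D 3 4) (D 0 3) = 0 := by
    rw [hB 3 4 0 3 (by decide) (by decide), if_neg (by decide), if_neg (by decide)]
  have e13 : B (D 2 3) (D 1 2) = 0 := by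
    rw [hB 2 3 1 2 (by decide) (by decide), if_neg (by decide), if_neg (by decide)]
  have e14 : B (D 2 3) (D 0 4) = 1 := by
    rw [hB 2 3 0 4 (by decide) (by decide), if_neg (by decide), if_pos (by decide)]
  have e15 : B (D 2 3) (D 0 3) = 0 := by
    rw [hB 2 3 0 3 (by decide) (by decide), if_neg (by decide), if_neg (by decide)]
  have e16 : B (D 0 1) (D 1 2) = 0 := by
    rw [hB 0 1 1 2 (by decide) (by decide), if_neg (by decide), if_neg (by decide)]
  have e17 : B (D 0 1) (D 0 4) = 0 := by
    rw [hB 0 1 0 4 (by decide) (by decide), if_neg (by decide), if_neg (by decide)]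
  have e18 : B (D 0 1) (D 0 3) = 0 := by
    rw [hB 0 1 0 3 (by decide) (by decide), if_neg (by decide), if_neg (by decide)]
  refine ⟨?_, ?_, ?_⟩ <;>
    simp only [δ₂, δ₁₂, δ₀, map_add, map_neg, map_sub, map_smul, LinearMap.add_apply,
      LinearMap.neg_apply, LinearMap.sub_apply, LinearMap.smul_apply, smul_eq_mul,
      e1, e2, e3, e4, e5, e6, e7, e8, e9, e10, e11, e12, e13, e14, e15, e16, e17, e18] <;>
    norm_num
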